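/- Let n = p₁⋯p_k be a prime factorization of n. Then rb(Z_n,S) ≤ 2(1−k) + Σ_{i=1}^{k} rb(Z_{p_i},S). -/

import Mathlib

/-!
Induction on the number of prime factors reduces the bound to
`rb(ℤ_{mp}) + 2 ≤ rb(ℤ_m) + rb(ℤ_p)` for `p` prime. Let `c` be a rainbow-free coloring of `ℤ_{mp}`
with `r` colors and look at the fibers of `ℤ_{mp} → ℤ_m`, the cosets of `mℤ_{mp} ≅ ℤ_p`. Pick a
fiber `F`, non-monochromatic if there is one, with color set `S`; a translate of `c` restricted to
`F` is a rainbow-free coloring of `ℤ_p`, so `|S| < rb(ℤ_p)`. As every nonzero element of `ℤ_p`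
generates it, `F` has a jump `c z ≠ c (z + k)` for each nonzero `k` in the kernel, and this forces
every fiber to use at most one color outside `S`. Coloring each fiber by that color, or by one
extra color when there is none (as for `F`), gives a rainbow-free coloring of `ℤ_m` that uses the
`r - |S|` colors outside `S` and the extra one, so `r - |S| + 1 < rb(ℤ_m)`; hence
`r ≤ rb(ℤ_m) + rb(ℤ_p) - 3`.
-/

/-- `c` admits a rainbow solution to the Sidon equation `x₁ + x₂ = x₃ + x₄`:
a solution whose four colors are pairwise distinct. -/
def HasRainbowSidon {n : ℕ} {α : Type*} (c : ZMod n → α) : Prop :=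
  ∃ x₁ x₂ x₃ x₄ : ZMod n, x₁ + x₂ = x₃ + x₄ ∧
    c x₁ ≠ c x₂ ∧ c x₁ ≠ c x₃ ∧ c x₁ ≠ c x₄ ∧
    c x₂ ≠ c x₃ ∧ c x₂ ≠ c x₄ ∧ c x₃ ≠ c x₄

/-- The rainbow number `rb(ℤ_n, S)` of `ℤ_n` for the Sidon equation: the least `r > 0`
such that every exact (surjective) `r`-coloring of `ℤ_n` admits a rainbow Sidon solution.
(When no such `r` exists, `r = n + 1` belongs to the set vacuously, matching the
convention `rb(ℤ_n, S) = n + 1`.) -/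
noncomputable def rbSidon (n : ℕ) : ℕ :=
  sInf {r : ℕ | 0 < r ∧ ∀ c : ZMod n → Fin r, Function.Surjective c → HasRainbowSidon c}

section Rainbow

variable {n : ℕ} {α β : Type*} {c : ZMod n → α}

theorem HasRainbowSidon.of_comp (f : α → β) (h : HasRainbowSidon (f ∘ c)) :
    HasRainbowSidon c := by
  obtain ⟨x₁, x₂, x₃, x₄, hsum, h₁₂, h₁₃, h₁₄, h₂₃, h₂₄, h₃₄⟩ := h
  exact ⟨x₁, x₂, x₃, x₄, hsum, ne_of_apply_ne f h₁₂, ne_of_apply_ne f h₁₃,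
    ne_of_apply_ne f h₁₄, ne_of_apply_ne f h₂₃, ne_of_apply_ne f h₂₄, ne_of_apply_ne f h₃₄⟩

theorem HasRainbowSidon.of_comp_affine {p : ℕ} (ι : ZMod p →+ ZMod n) (u : ZMod n)
    (h : HasRainbowSidon fun t => c (u + ι t)) : HasRainbowSidon c := by
  obtain ⟨t₁, t₂, t₃, t₄, hsum, h₁₂, h₁₃, h₁₄, h₂₃, h₂₄, h₃₄⟩ := h
  refine ⟨u + ι t₁, u + ι t₂, u + ι t₃, u + ι t₄, ?_, h₁₂, h₁₃, h₁₄, h₂₃, h₂₄, h₃₄⟩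
  have := congrArg ι hsum
  simp only [map_add] at this
  linear_combination this

theorem eq_or_eq_or_eq_of_not_hasRainbowSidon (hc : ¬HasRainbowSidon c) {x₁ x₂ x₃ x₄ : ZMod n}
    (hsum : x₁ + x₂ = x₃ + x₄) (h₁₂ : c x₁ ≠ c x₂) (h₁₃ : c x₁ ≠ c x₃) (h₂₃ : c x₂ ≠ c x₃) :
    c x₄ = c x₁ ∨ c x₄ = c x₂ ∨ c x₄ = c x₃ := by
  by_contra! h
  exact hc ⟨x₁, x₂, x₃, x₄, hsum, h₁₂, h₁₃, h.1.symm, h₂₃, h.2.1.symm, h.2.2.symm⟩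

/-- A rainbow solution uses the color `a` at most once, and the Sidon equation is symmetric
enough to move that entry to the last position. -/
theorem not_hasRainbowSidon_of_forall_ne (a : α)
    (h : ∀ x₁ x₂ x₃ x₄ : ZMod n, x₁ + x₂ = x₃ + x₄ → c x₁ ≠ a → c x₂ ≠ a → c x₃ ≠ a →
      c x₁ ≠ c x₂ → c x₁ ≠ c x₃ → c x₂ ≠ c x₃ → c x₄ = c x₁ ∨ c x₄ = c x₂ ∨ c x₄ = c x₃) :
    ¬HasRainbowSidon c := by
  rintro ⟨x₁, x₂, x₃, x₄, hsum, h₁₂, h₁₃, h₁₄, h₂₃, h₂₄, h₃₄⟩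
  have h₁ := h x₁ x₂ x₃ x₄ hsum
  have h₂ := h x₁ x₂ x₄ x₃ (hsum.trans (add_comm _ _))
  have h₃ := h x₃ x₄ x₁ x₂ hsum.symm
  have h₄ := h x₃ x₄ x₂ x₁ (hsum.symm.trans (add_comm _ _))
  clear h hsum
  by_cases c x₁ = a <;> by_cases c x₂ = a <;> by_cases c x₃ = a <;> grind

end Rainbow

section RainbowNumber

theorem rbSidon_le {n r : ℕ} (hr : 0 < r)
    (h : ∀ c : ZMod n → Fin r, Function.Surjective c → HasRainbowSidon c) : rbSidon n ≤ r :=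
  Nat.sInf_le ⟨hr, h⟩

/-- There is no surjection from `ZMod n` onto `n + 1` colors, so the set defining `rbSidon n` is
nonempty. -/
theorem rbSidon_mem (n : ℕ) [NeZero n] : 0 < rbSidon n ∧
    ∀ c : ZMod n → Fin (rbSidon n), Function.Surjective c → HasRainbowSidon c :=
  Nat.sInf_mem (s := {r | 0 < r ∧ ∀ c : ZMod n → Fin r, Function.Surjective c → _})
    ⟨n + 1, n.succ_pos, fun c hc => absurd (Fintype.card_le_of_surjective c hc) (by simp)⟩

theorem ncard_range_lt_rbSidon {n : ℕ} [NeZero n] {α : Type*} {c : ZMod n → α}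
    (hc : ¬HasRainbowSidon c) : (Set.range c).ncard < rbSidon n := by
  classical
  by_contra! hle
  obtain ⟨hpos, hall⟩ := rbSidon_mem n
  obtain ⟨e⟩ : Nonempty (Fin (rbSidon n) ↪ Set.range c) :=
    Function.Embedding.nonempty_of_card_le <| by
      rwa [Fintype.card_fin, ← Nat.card_eq_fintype_card, Nat.card_coe_set_eq]
  have : Nonempty (Fin (rbSidon n)) := ⟨⟨0, hpos⟩⟩
  let g : α → Fin (rbSidon n) := Function.invFun (Subtype.val ∘ e)
  have hg : Function.Surjective (g ∘ c) := fun i => by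
    obtain ⟨x, hx⟩ := (e i).2
    refine ⟨x, ?_⟩
    rw [Function.comp_apply, hx]
    exact Function.leftInverse_invFun (Subtype.val_injective.comp e.injective) i
  exact hc ((hall _ hg).of_comp g)

theorem rbSidon_one_le_two : rbSidon 1 ≤ 2 :=
  rbSidon_le two_pos fun c hc => absurd (Fintype.card_le_of_surjective c hc) (by simp)

end RainbowNumber

section Fibers

variable {N m p : ℕ} {α : Type*} {π : ZMod N →+ ZMod m} {ι : ZMod p →+ ZMod N}
  (c : ZMod N → α)

/-- Since `ZMod p` is a field, every nonzero `k ∈ ker π` generates `ker π`; so if `c` took the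
same value at `z` and `z + k` throughout the fiber of `x`, the fiber would be monochromatic. -/
theorem exists_ne_add_of_ne [Fact p.Prime] (hexact : Function.Exact ι π) {x y k : ZMod N}
    (hxy : π x = π y) (hc : c x ≠ c y) (hk : π k = 0) (hk₀ : k ≠ 0) :
    ∃ z, π z = π x ∧ c z ≠ c (z + k) := by
  by_contra! hconst
  have hmul : ∀ j : ℕ, c (x + j • k) = c x := by
    intro j
    induction j with
    | zero => simp
    | succ j ih =>
      have hj : π (x + j • k) = π x := by rw [map_add, map_nsmul, hk, smul_zero, add_zero]
      rw [succ_nsmul, ← add_assoc, ← hconst _ hj, ih]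
  obtain ⟨s, rfl⟩ := (hexact k).1 hk
  obtain ⟨t, ht⟩ := (hexact (y - x)).1 (by simp [hxy])
  have hs : s ≠ 0 := by
    rintro rfl
    simp at hk₀
  have hy : y = x + (t * s⁻¹).val • ι s := by
    rw [← map_nsmul, nsmul_eq_mul, ZMod.natCast_zmod_val, inv_mul_cancel_right₀ hs, ht]
    abel
  exact hc (by rw [hy, hmul])

/-- A jump `c z ≠ c (z + (x - y))` inside the fiber `F` of `u` yields the rainbow solution
`x + z = y + (z + (x - y))` whenever `c x ≠ c y` are colors not occurring on `F`. -/
theorem eq_of_notMem_image_fiber [Fact p.Prime] (hexact : Function.Exact ι π)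
    (hc : ¬HasRainbowSidon c) {u v : ZMod N} (hv : π v = π u) (huv : c v ≠ c u) {x y : ZMod N}
    (hxy : π x = π y) (hx : c x ∉ c '' {z | π z = π u}) (hy : c y ∉ c '' {z | π z = π u}) :
    c x = c y := by
  by_contra hne
  obtain ⟨z, hz, hzk⟩ := exists_ne_add_of_ne c hexact hv huv (k := x - y) (by simp [hxy])
    (sub_ne_zero.2 fun h => hne (h ▸ rfl))
  have hzu : π z = π u := hz.trans hv
  have hzku : π (z + (x - y)) = π u := by simp [hzu, hxy]
  refine hc ⟨x, z, y, z + (x - y), by abel, fun h => hx ⟨z, hzu, h.symm⟩, hne,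
    fun h => hx ⟨_, hzku, h.symm⟩, fun h => hy ⟨z, hzu, h⟩, hzk, fun h => hy ⟨_, hzku, h.symm⟩⟩

end Fibers

section ColorOutside

variable {N m : ℕ} {α : Type*} (π : ZMod N →+ ZMod m) (c : ZMod N → α) (S : Set α)

open Classical in
/-- Only meaningful when every fiber uses at most one color outside `S`; otherwise the choice
below picks one of them arbitrarily. -/
noncomputable def colorOutside (i : ZMod m) : Option α :=
  if h : ∃ x, π x = i ∧ c x ∉ S then some (c h.choose) else none

variable {π c S}

theorem colorOutside_eq_none_iff {i : ZMod m} :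
    colorOutside π c S i = none ↔ ∀ x, π x = i → c x ∈ S := by
  unfold colorOutside
  split_ifs with h
  · simpa using h
  · simpa using h

theorem exists_of_colorOutside_eq_some {i : ZMod m} {a : α} (h : colorOutside π c S i = some a) :
    ∃ x, π x = i ∧ c x = a ∧ a ∉ S := by
  unfold colorOutside at h
  split_ifs at h with hex
  obtain ⟨hπ, hS⟩ := hex.choose_spec
  exact ⟨_, hπ, Option.some_injective _ h, Option.some_injective _ h ▸ hS⟩

theorem colorOutside_apply_of_notMem (hS : ∀ x y, π x = π y → c x ∉ S → c y ∉ S → c x = c y)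
    {x : ZMod N} (hx : c x ∉ S) : colorOutside π c S (π x) = some (c x) := by
  obtain ⟨a, ha⟩ := Option.ne_none_iff_exists'.1 fun h => hx (colorOutside_eq_none_iff.1 h x rfl)
  obtain ⟨y, hy, rfl, haS⟩ := exists_of_colorOutside_eq_some ha
  rw [ha, hS y x hy haS hx]

theorem not_hasRainbowSidon_colorOutside (hc : ¬HasRainbowSidon c)
    (hS : ∀ x y, π x = π y → c x ∉ S → c y ∉ S → c x = c y) :
    ¬HasRainbowSidon (colorOutside π c S) := by
  refine not_hasRainbowSidon_of_forall_ne none fun i₁ i₂ i₃ i₄ hsum h₁ h₂ h₃ h₁₂ h₁₃ h₂₃ => ?_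
  obtain ⟨a₁, ha₁⟩ := Option.ne_none_iff_exists'.1 h₁
  obtain ⟨a₂, ha₂⟩ := Option.ne_none_iff_exists'.1 h₂
  obtain ⟨a₃, ha₃⟩ := Option.ne_none_iff_exists'.1 h₃
  obtain ⟨x₁, rfl, rfl, hx₁⟩ := exists_of_colorOutside_eq_some ha₁
  obtain ⟨x₂, rfl, rfl, hx₂⟩ := exists_of_colorOutside_eq_some ha₂
  obtain ⟨x₃, rfl, rfl, hx₃⟩ := exists_of_colorOutside_eq_some ha₃
  simp only [ha₁, ha₂, ha₃, ne_eq, Option.some.injEq] at h₁₂ h₁₃ h₂₃ ⊢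
  have hx₄ : π (x₁ + x₂ - x₃) = i₄ := by
    rw [map_sub, map_add, hsum]
    abel
  have hc₄ :=
    eq_or_eq_or_eq_of_not_hasRainbowSidon hc (x₄ := x₁ + x₂ - x₃) (by abel) h₁₂ h₁₃ h₂₃
  have hS₄ : c (x₁ + x₂ - x₃) ∉ S := by
    rcases hc₄ with h | h | h <;> rwa [h]
  rw [← hx₄, colorOutside_apply_of_notMem hS hS₄]
  rcases hc₄ with h | h | h <;> simp [h]

end ColorOutside

theorem add_three_le_rbSidon_add {N m p r : ℕ} [NeZero m] [Fact p.Prime] {π : ZMod N →+ ZMod m}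
    {ι : ZMod p →+ ZMod N} (hexact : Function.Exact ι π) {c : ZMod N → Fin r}
    (hsurj : Function.Surjective c) (hc : ¬HasRainbowSidon c) :
    r + 3 ≤ rbSidon m + rbSidon p := by
  obtain ⟨u, hS⟩ : ∃ u, ∀ x y, π x = π y →
      c x ∉ c '' {z | π z = π u} → c y ∉ c '' {z | π z = π u} → c x = c y := by
    by_cases hmono : ∀ x y, π x = π y → c x = c y
    · exact ⟨0, fun x y hxy _ _ => hmono x y hxy⟩
    · push Not at hmono
      obtain ⟨u, v, huv, hne⟩ := hmono
      exact ⟨u, fun x y => eq_of_notMem_image_fiber c hexact hc huv.symm hne.symm⟩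
  set S := c '' {z | π z = π u}
  have hSp : S.ncard < rbSidon p := by
    have hSι : S ⊆ Set.range fun t => c (u + ι t) := by
      rintro _ ⟨z, hz, rfl⟩
      obtain ⟨t, ht⟩ := (hexact (z - u)).1 (by rw [map_sub, sub_eq_zero]; exact hz)
      exact ⟨t, by simp only [ht, add_sub_cancel]⟩
    exact (Set.ncard_le_ncard hSι).trans_lt
      (ncard_range_lt_rbSidon fun h => hc (h.of_comp_affine ι u))
  have hSm := ncard_range_lt_rbSidon (not_hasRainbowSidon_colorOutside hc hS)
  have hcover : insert none (some '' Sᶜ) ⊆ Set.range (colorOutside π c S) := by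
    rintro _ (rfl | ⟨a, ha, rfl⟩)
    · exact ⟨π u, colorOutside_eq_none_iff.2 fun x hx => ⟨x, hx, rfl⟩⟩
    · obtain ⟨x, rfl⟩ := hsurj a
      exact ⟨π x, colorOutside_apply_of_notMem hS ha⟩
  have hcard := Set.ncard_le_ncard hcover
  rw [Set.ncard_insert_of_notMem (by simp),
    Set.ncard_image_of_injective _ (Option.some_injective _)] at hcard
  have hsplit := Set.ncard_add_ncard_compl S
  rw [Nat.card_eq_fintype_card, Fintype.card_fin] at hsplit
  omega

def ZMod.mulLeftHom (m p : ℕ) : ZMod p →+ ZMod (m * p) :=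
  ZMod.lift p ⟨(AddMonoidHom.mulLeft (m : ZMod (m * p))).comp (Int.castAddHom _), by
    simp [← Nat.cast_mul]⟩

theorem ZMod.exact_mulLeftHom_castHom (m p : ℕ) :
    Function.Exact (ZMod.mulLeftHom m p)
      (ZMod.castHom (dvd_mul_right m p) (ZMod m)).toAddMonoidHom := by
  intro y
  obtain ⟨z, rfl⟩ := ZMod.intCast_surjective y
  simp only [RingHom.toAddMonoidHom_eq_coe, AddMonoidHom.coe_coe, map_intCast,
    ZMod.intCast_zmod_eq_zero_iff_dvd, Set.mem_range]
  constructor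
  · rintro ⟨w, rfl⟩
    exact ⟨w, by simp [ZMod.mulLeftHom, ZMod.lift_coe]⟩
  · rintro ⟨t, ht⟩
    obtain ⟨w, rfl⟩ := ZMod.intCast_surjective t
    have hdvd : ((m * p : ℕ) : ℤ) ∣ z - m * w := by
      rw [← ZMod.intCast_eq_intCast_iff_dvd_sub, ← ht]
      simp [ZMod.mulLeftHom, ZMod.lift_coe]
    have hz := dvd_add ((dvd_mul_right (m : ℤ) p).trans (by exact_mod_cast hdvd))
      (dvd_mul_right (m : ℤ) w)
    rwa [sub_add_cancel] at hz

theorem rbSidon_mul_add_two_le {m p : ℕ} (hm : m ≠ 0) (hp : p.Prime) :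
    rbSidon (m * p) + 2 ≤ rbSidon m + rbSidon p := by
  have : NeZero m := ⟨hm⟩
  have : Fact p.Prime := ⟨hp⟩
  have hexact := ZMod.exact_mulLeftHom_castHom m p
  -- the one-color coloring is rainbow-free, which makes `rbSidon m + rbSidon p - 2` positive
  have hpos : 1 + 3 ≤ rbSidon m + rbSidon p :=
    add_three_le_rbSidon_add hexact (c := fun _ => (0 : Fin 1))
      (fun a => ⟨0, Subsingleton.elim _ _⟩) fun ⟨_, _, _, _, _, h, _⟩ => h rfl
  have := rbSidon_le (n := m * p) (r := rbSidon m + rbSidon p - 2) (by omega)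
    fun c hsurj => by
      by_contra hc
      have := add_three_le_rbSidon_add hexact hsurj hc
      omega
  omega

theorem rb_sidon_upper_bound_general (n : ℕ) (l : List ℕ)
    (hprime : ∀ p ∈ l, p.Prime) (hprod : n = l.prod) :
    (rbSidon n : ℤ) ≤ 2 * (1 - (l.length : ℤ)) + (l.map fun p => (rbSidon p : ℤ)).sum := by
  subst hprod
  induction l with
  | nil => simpa using rbSidon_one_le_two
  | cons p l ih =>
    obtain ⟨hp, hprime⟩ := List.forall_mem_cons.1 hprime
    have hl := ih hprime
    have hstep := rbSidon_mul_add_two_le (List.prod_pos fun q hq => (hprime q hq).pos).ne' hp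
    rw [List.prod_cons, mul_comm]
    simp only [List.map_cons, List.sum_cons, List.length_cons]
    push_cast
    omega

theorem rb_sidon_upper_bound (n : ℕ) (l : List ℕ) (hne : l ≠ [])
    (hprime : ∀ p ∈ l, p.Prime) (hprod : n = l.prod) :
    (rbSidon n : ℤ) ≤ 2 * (1 - (l.length : ℤ)) + (l.map fun p => (rbSidon p : ℤ)).sum :=
  rb_sidon_upper_bound_general n l hprime hprod
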